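/- Let θ : ℝ^m → ℝ^n be a map whose coordinates are tropical rational functions (piecewise integral-affine functions with finitely many pieces). Then the image under θ of any ℝ-rational polyhedral set in ℝ^m is a finite union of ℝ-rational polyhedral sets in ℝ^n. -/
import Mathlib


/-- A tropical (max-plus) polynomial function `ℝ^m → ℝ`. -/
def IsTropPoly (m : ℕ) (f : (Fin m → ℝ) → ℝ) : Prop :=
  ∃ (A : Finset (Fin m → ℕ)) (hA : A.Nonempty) (a : (Fin m → ℕ) → ℝ),
    ∀ x, f x = A.sup' hA fun i => a i + ∑ j, (i j : ℝ) * x j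

/-- A tropical rational function is a difference of two tropical polynomial functions. -/
def IsTropRat (m : ℕ) (f : (Fin m → ℝ) → ℝ) : Prop :=
  ∃ f₁ f₂, IsTropPoly m f₁ ∧ IsTropPoly m f₂ ∧ ∀ x, f x = f₁ x - f₂ x

/-- An `ℝ`-rational polyhedral set: the solution set of finitely many linear
inequalities with rational non-constant coefficients (and real constant terms). -/
def IsRatPolyhedral (n : ℕ) (P : Set (Fin n → ℝ)) : Prop :=
  ∃ (k : ℕ) (a : Fin k → Fin n → ℚ) (b : Fin k → ℝ),
    P = {x | ∀ i, (∑ j, (a i j : ℝ) * x j) + b i ≤ 0}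

lemma ratPoly_fintype {n : ℕ} {ι : Type} [Fintype ι] (a : ι → Fin n → ℚ) (b : ι → ℝ) :
    IsRatPolyhedral n {x | ∀ i, (∑ j, (a i j : ℝ) * x j) + b i ≤ 0} := by
  let e := Fintype.equivFin ι
  refine ⟨Fintype.card ι, fun i => a (e.symm i), fun i => b (e.symm i), ?_⟩
  ext x
  simp only [Set.mem_setOf_eq]
  exact ⟨fun h i => h _, fun h i => by simpa using h (e i)⟩

lemma fm {d : ℕ} (P : Set (Fin (d+1) → ℝ)) (hP : IsRatPolyhedral (d+1) P) :
    IsRatPolyhedral d {x | ∃ t, Fin.snoc x t ∈ P} := by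
  classical
  obtain ⟨k, a, b, rfl⟩ := hP
  set A : Fin k → ℚ := fun i => a i (Fin.last d) with hAdef
  set L : Fin k → (Fin d → ℝ) → ℝ :=
    fun i x => ∑ j, (a i (Fin.castSucc j) : ℝ) * x j with hLdef
  have hmem : ∀ (x : Fin d → ℝ) (t : ℝ),
      (∀ i, (∑ j : Fin (d+1), (a i j : ℝ) * (Fin.snoc x t : Fin (d+1) → ℝ) j) + b i ≤ 0) ↔
      ∀ i, L i x + (A i : ℝ) * t + b i ≤ 0 := by
    intro x t
    apply forall_congr'
    intro i
    rw [Fin.sum_univ_castSucc]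
    simp [hLdef, hAdef]
  -- new index type
  let ι : Type := {i // A i = 0} ⊕ ({i // 0 < A i} × {i // A i < 0})
  let a' : ι → Fin d → ℚ := fun i' => match i' with
    | Sum.inl z => fun j => a z.1 (Fin.castSucc j)
    | Sum.inr (p, q) => fun j => A p.1 * a q.1 (Fin.castSucc j) - A q.1 * a p.1 (Fin.castSucc j)
  let b' : ι → ℝ := fun i' => match i' with
    | Sum.inl z => b z.1
    | Sum.inr (p, q) => (A p.1 : ℝ) * b q.1 - (A q.1 : ℝ) * b p.1
  have hsumZ : ∀ (z : {i // A i = 0}) (x : Fin d → ℝ),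
      (∑ j, (a' (Sum.inl z) j : ℝ) * x j) + b' (Sum.inl z) = L z.1 x + b z.1 := by
    intro z x; simp [a', b', hLdef]
  have hsumPQ : ∀ (p : {i // 0 < A i}) (q : {i // A i < 0}) (x : Fin d → ℝ),
      (∑ j, (a' (Sum.inr (p, q)) j : ℝ) * x j) + b' (Sum.inr (p, q)) =
      (A p.1 : ℝ) * (L q.1 x + b q.1) - (A q.1 : ℝ) * (L p.1 x + b p.1) := by
    intro p q x
    simp only [a', b', hLdef]
    push_cast
    simp only [sub_mul, mul_assoc]
    rw [Finset.sum_sub_distrib, ← Finset.mul_sum, ← Finset.mul_sum]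
    ring
  have hset : {x : Fin d → ℝ | ∃ t, Fin.snoc x t ∈
        {y : Fin (d+1) → ℝ | ∀ i, (∑ j, (a i j : ℝ) * y j) + b i ≤ 0}} =
      {x | ∀ i', (∑ j, (a' i' j : ℝ) * x j) + b' i' ≤ 0} := by
    ext x
    simp only [Set.mem_setOf_eq]
    constructor
    · rintro ⟨t, ht⟩
      replace ht := (hmem x t).mp ht
      intro i'
      match i' with
      | Sum.inl z =>
        rw [hsumZ z x]
        have h0 := ht z.1
        rw [z.2] at h0
        push_cast at h0
        linarith
      | Sum.inr (p, q) =>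
        rw [hsumPQ p q x]
        have hp : (0:ℝ) < (A p.1 : ℝ) := by exact_mod_cast p.2
        have hq : (A q.1 : ℝ) < 0 := by exact_mod_cast q.2
        have h1 : (A p.1 : ℝ) * (L q.1 x + (A q.1:ℝ) * t + b q.1) ≤ 0 :=
          mul_nonpos_of_nonneg_of_nonpos hp.le (ht q.1)
        have h2 : (-(A q.1 : ℝ)) * (L p.1 x + (A p.1:ℝ) * t + b p.1) ≤ 0 :=
          mul_nonpos_of_nonneg_of_nonpos (by linarith) (ht p.1)
        nlinarith [h1, h2]
    · intro hx
      have hz : ∀ i, A i = 0 → L i x + b i ≤ 0 := by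
        intro i hi
        have h := hx (Sum.inl ⟨i, hi⟩)
        rwa [hsumZ ⟨i, hi⟩ x] at h
      have hpq : ∀ (i i' : Fin k), 0 < A i → A i' < 0 →
          (A i : ℝ) * (L i' x + b i') - (A i' : ℝ) * (L i x + b i) ≤ 0 := by
        intro i i' hi hi'
        have h := hx (Sum.inr (⟨i, hi⟩, ⟨i', hi'⟩))
        rwa [hsumPQ ⟨i, hi⟩ ⟨i', hi'⟩ x] at h
      let u : Fin k → ℝ := fun i => -(L i x + b i) / (A i : ℝ)
      let Pos : Finset (Fin k) := Finset.univ.filter fun i => 0 < A i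
      let Neg : Finset (Fin k) := Finset.univ.filter fun i => A i < 0
      have key : ∀ t : ℝ, (∀ i ∈ Pos, t ≤ u i) → (∀ i ∈ Neg, u i ≤ t) →
          ∀ i, L i x + (A i : ℝ) * t + b i ≤ 0 := by
        intro t hup hlo i
        rcases lt_trichotomy (A i) 0 with h | h | h
        · have hi : i ∈ Neg := by simp [Neg, h]
          have hAi : (A i : ℝ) < 0 := by exact_mod_cast h
          have h1 := hlo i hi
          have h2 : (A i : ℝ) * t ≤ (A i:ℝ) * u i := mul_le_mul_of_nonpos_left h1 hAi.le
          have hu : (A i : ℝ) * u i = -(L i x + b i) := by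
            simp only [u]; rw [mul_comm, div_mul_cancel₀ _ hAi.ne]
          linarith
        · have hAi : (A i : ℝ) = 0 := by exact_mod_cast h
          rw [hAi]
          have := hz i h; linarith
        · have hi : i ∈ Pos := by simp [Pos, h]
          have hAi : (0:ℝ) < (A i : ℝ) := by exact_mod_cast h
          have h1 := hup i hi
          have h2 : (A i : ℝ) * t ≤ (A i:ℝ) * u i := mul_le_mul_of_nonneg_left h1 hAi.le
          have hu : (A i : ℝ) * u i = -(L i x + b i) := by
            simp only [u]; rw [mul_comm, div_mul_cancel₀ _ hAi.ne']
          linarith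
      have hlu : ∀ i ∈ Pos, ∀ i' ∈ Neg, u i' ≤ u i := by
        intro i hi i' hi'
        have hip : 0 < A i := by simpa [Pos] using hi
        have hin : A i' < 0 := by simpa [Neg] using hi'
        have h := hpq i i' hip hin
        have hAi : (0:ℝ) < (A i : ℝ) := by exact_mod_cast hip
        have hAi' : (A i' : ℝ) < 0 := by exact_mod_cast hin
        simp only [u]
        have h1 : -(L i' x + b i') / (A i' : ℝ) = (L i' x + b i') / (-(A i' : ℝ)) := by
          rw [div_neg, neg_div]
        rw [h1, div_le_div_iff₀ (by linarith) hAi]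
        nlinarith [h]
      rcases Finset.eq_empty_or_nonempty Pos with hPe | hPn
      · rcases Finset.eq_empty_or_nonempty Neg with hNe | hNn
        · exact ⟨0, (hmem x 0).mpr (key 0 (by simp [hPe]) (by simp [hNe]))⟩
        · refine ⟨Neg.sup' hNn u, (hmem x _).mpr (key _ (by simp [hPe]) ?_)⟩
          intro i hi; exact Finset.le_sup' u hi
      · refine ⟨Pos.inf' hPn u, (hmem x _).mpr (key _ ?_ ?_)⟩
        · intro i hi; exact Finset.inf'_le u hi
        · intro i' hi'
          rw [Finset.le_inf'_iff]
          intro i hi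
          exact hlu i hi i' hi'
  rw [hset]
  exact ratPoly_fintype a' b'

lemma proj_many (n : ℕ) : ∀ (m : ℕ) (P : Set (Fin (n+m) → ℝ)), IsRatPolyhedral (n+m) P →
    IsRatPolyhedral n ((fun (z : Fin (n+m) → ℝ) (i : Fin n) => z (Fin.castAdd m i)) '' P) := by
  intro m
  induction m with
  | zero =>
    intro P hP
    have : (fun (z : Fin (n+0) → ℝ) (i : Fin n) => z (Fin.castAdd 0 i)) '' P = P := by
      have he : (fun (z : Fin (n+0) → ℝ) (i : Fin n) => z (Fin.castAdd 0 i)) = id := by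
        funext z i
        show z (Fin.castAdd 0 i) = z i
        congr 1
      rw [he, Set.image_id]
    rw [this]; exact hP
  | succ m ih =>
    intro P hP
    let P' : Set (Fin (n+m) → ℝ) := {x | ∃ t, Fin.snoc x t ∈ P}
    have hP' : IsRatPolyhedral (n+m) P' := fm P hP
    have himg : (fun (z : Fin (n+(m+1)) → ℝ) (i : Fin n) => z (Fin.castAdd (m+1) i)) '' P =
        (fun (z : Fin (n+m) → ℝ) (i : Fin n) => z (Fin.castAdd m i)) '' P' := by
      ext y
      simp only [Set.mem_image]
      constructor
      · rintro ⟨z, hz, rfl⟩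
        refine ⟨fun j => z (Fin.castSucc j), ⟨z (Fin.last (n+m)), ?_⟩, ?_⟩
        · have : (Fin.snoc (fun j => z (Fin.castSucc j)) (z (Fin.last (n+m))) : Fin (n+m+1) → ℝ) = z := by
            funext w
            refine Fin.lastCases ?_ ?_ w
            · simp
            · intro j; simp
          rw [this]; exact hz
        · funext i
          show z (Fin.castSucc (Fin.castAdd m i)) = z (Fin.castAdd (m+1) i)
          congr 1
      · rintro ⟨x, ⟨t, ht⟩, rfl⟩
        refine ⟨Fin.snoc x t, ht, ?_⟩
        funext i
        show (Fin.snoc x t : Fin (n+m+1) → ℝ) (Fin.castAdd (m+1) i) = x (Fin.castAdd m i)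
        have : Fin.castAdd (m+1) i = Fin.castSucc (Fin.castAdd m i) := Fin.ext rfl
        rw [this, Fin.snoc_castSucc]
    rw [himg]
    exact ih P' hP'

lemma affine_image {m n : ℕ} (M : Fin n → Fin m → ℚ) (c : Fin n → ℝ)
    (R : Set (Fin m → ℝ)) (hR : IsRatPolyhedral m R) :
    IsRatPolyhedral n ((fun x (i : Fin n) => (∑ j, (M i j : ℝ) * x j) + c i) '' R) := by
  classical
  obtain ⟨k, a, b, rfl⟩ := hR
  let ι : Type := Fin k ⊕ (Fin n ⊕ Fin n)
  let a' : ι → Fin (n+m) → ℚ := fun i' => match i' with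
    | Sum.inl i => Fin.addCases (fun _ => 0) (fun j => a i j)
    | Sum.inr (Sum.inl i) => Fin.addCases (fun i'' => if i'' = i then 1 else 0) (fun j => -(M i j))
    | Sum.inr (Sum.inr i) => Fin.addCases (fun i'' => if i'' = i then -1 else 0) (fun j => M i j)
  let b' : ι → ℝ := fun i' => match i' with
    | Sum.inl i => b i
    | Sum.inr (Sum.inl i) => -(c i)
    | Sum.inr (Sum.inr i) => c i
  let S : Set (Fin (n+m) → ℝ) := {z | ∀ i', (∑ w, (a' i' w : ℝ) * z w) + b' i' ≤ 0}
  have h1 : ∀ (i : Fin k) (z : Fin (n+m) → ℝ),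
      (∑ w, (a' (Sum.inl i) w : ℝ) * z w) + b' (Sum.inl i)
        = (∑ j, (a i j : ℝ) * z (Fin.natAdd n j)) + b i := by
    intro i z
    simp [a', b', Fin.sum_univ_add]
  have h2 : ∀ (i : Fin n) (z : Fin (n+m) → ℝ),
      (∑ w, (a' (Sum.inr (Sum.inl i)) w : ℝ) * z w) + b' (Sum.inr (Sum.inl i))
        = z (Fin.castAdd m i) - ((∑ j, (M i j : ℝ) * z (Fin.natAdd n j)) + c i) := by
    intro i z
    simp only [a', b', Fin.sum_univ_add, Fin.addCases_left, Fin.addCases_right,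
      apply_ite (fun q : ℚ => (q:ℝ)), Rat.cast_one, Rat.cast_zero, Rat.cast_neg,
      ite_mul, one_mul, zero_mul, neg_mul]
    rw [Finset.sum_ite_eq' Finset.univ i (fun i'' => z (Fin.castAdd m i''))]
    simp only [Finset.mem_univ, if_true]
    rw [Finset.sum_neg_distrib]
    ring
  have h3 : ∀ (i : Fin n) (z : Fin (n+m) → ℝ),
      (∑ w, (a' (Sum.inr (Sum.inr i)) w : ℝ) * z w) + b' (Sum.inr (Sum.inr i))
        = ((∑ j, (M i j : ℝ) * z (Fin.natAdd n j)) + c i) - z (Fin.castAdd m i) := by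
    intro i z
    simp only [a', b', Fin.sum_univ_add, Fin.addCases_left, Fin.addCases_right,
      apply_ite (fun q : ℚ => (q:ℝ)), Rat.cast_one, Rat.cast_zero, Rat.cast_neg,
      ite_mul, neg_one_mul, zero_mul]
    rw [Finset.sum_ite_eq' Finset.univ i (fun i'' => -(z (Fin.castAdd m i'')))]
    simp only [Finset.mem_univ, if_true]
    ring
  have himageEq : ((fun (x : Fin m → ℝ) (i : Fin n) => (∑ j, (M i j : ℝ) * x j) + c i) ''
      {x | ∀ i, (∑ j, (a i j : ℝ) * x j) + b i ≤ 0}) =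
      (fun (z : Fin (n+m) → ℝ) (i : Fin n) => z (Fin.castAdd m i)) '' S := by
    ext y
    simp only [Set.mem_image, Set.mem_setOf_eq]
    constructor
    · rintro ⟨x, hx, rfl⟩
      refine ⟨Fin.append (fun i => (∑ j, (M i j : ℝ) * x j) + c i) x, ?_, ?_⟩
      · intro i'
        match i' with
        | Sum.inl i =>
          rw [h1]
          simpa [Fin.append_right] using hx i
        | Sum.inr (Sum.inl i) =>
          rw [h2]
          simp [Fin.append_left, Fin.append_right]
        | Sum.inr (Sum.inr i) =>
          rw [h3]
          simp [Fin.append_left, Fin.append_right]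
      · funext i
        exact Fin.append_left _ _ i
    · rintro ⟨z, hz, rfl⟩
      refine ⟨fun j => z (Fin.natAdd n j), fun i => by simpa using (h1 i z) ▸ hz (Sum.inl i), ?_⟩
      funext i
      have e1 := hz (Sum.inr (Sum.inl i)); rw [h2] at e1
      have e2 := hz (Sum.inr (Sum.inr i)); rw [h3] at e2
      show (∑ j, (M i j : ℝ) * z (Fin.natAdd n j)) + c i = z (Fin.castAdd m i)
      linarith
  rw [himageEq]
  exact proj_many n m S (ratPoly_fintype a' b')

/-- If `θ : ℝ^m → ℝ^n` has tropical rational coordinate functions, then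
the image under `θ` of any `ℝ`-rational polyhedral set is a finite union of
`ℝ`-rational polyhedral sets. -/
theorem stmt17 (m n : ℕ) (θ : (Fin m → ℝ) → (Fin n → ℝ))
    (hθ : ∀ i, IsTropRat m fun x => θ x i)
    (P : Set (Fin m → ℝ)) (hP : IsRatPolyhedral m P) :
    ∃ (k : ℕ) (Q : Fin k → Set (Fin n → ℝ)),
      (∀ i, IsRatPolyhedral n (Q i)) ∧ θ '' P = ⋃ i, Q i := by
  classical
  choose f₁ f₂ h₁ h₂ hf using hθ
  choose A₁ hA₁ a₁ ha₁ using h₁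
  choose A₂ hA₂ a₂ ha₂ using h₂
  have hf' : ∀ i x, θ x i = f₁ i x - f₂ i x := hf
  obtain ⟨kP, aP, bP, rfl⟩ := hP
  -- linear form helper
  set lin : (Fin m → ℕ) → (Fin m → ℝ) → ℝ := fun v x => ∑ j, (v j : ℝ) * x j with hlin
  have hsub : ∀ (v w : Fin m → ℕ) (x : Fin m → ℝ),
      (∑ j, ((((v j : ℚ)) - (w j : ℚ) : ℚ) : ℝ) * x j) = lin v x - lin w x := by
    intro v w x
    rw [hlin]
    simp only
    rw [← Finset.sum_sub_distrib]
    apply Finset.sum_congr rfl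
    intro j _
    push_cast
    ring
  -- selection type
  let σT : Type := ∀ i : Fin n, (↥(A₁ i) × ↥(A₂ i))
  let ιR : Type := Fin kP ⊕ ((Σ i : Fin n, ↥(A₁ i)) ⊕ (Σ i : Fin n, ↥(A₂ i)))
  let aR : σT → ιR → Fin m → ℚ := fun σ i' => match i' with
    | Sum.inl i => aP i
    | Sum.inr (Sum.inl ⟨i, γ⟩) => fun j => ((γ.1 j : ℚ) - (((σ i).1.1 : Fin m → ℕ) j : ℚ))
    | Sum.inr (Sum.inr ⟨i, γ⟩) => fun j => ((γ.1 j : ℚ) - (((σ i).2.1 : Fin m → ℕ) j : ℚ))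
  let bR : σT → ιR → ℝ := fun σ i' => match i' with
    | Sum.inl i => bP i
    | Sum.inr (Sum.inl ⟨i, γ⟩) => a₁ i γ.1 - a₁ i (σ i).1.1
    | Sum.inr (Sum.inr ⟨i, γ⟩) => a₂ i γ.1 - a₂ i (σ i).2.1
  let R : σT → Set (Fin m → ℝ) := fun σ => {x | ∀ i', (∑ j, (aR σ i' j : ℝ) * x j) + bR σ i' ≤ 0}
  -- affine data
  let Mσ : σT → Fin n → Fin m → ℚ := fun σ i j =>
    (((σ i).1.1 : Fin m → ℕ) j : ℚ) - (((σ i).2.1 : Fin m → ℕ) j : ℚ)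
  let cσ : σT → Fin n → ℝ := fun σ i => a₁ i (σ i).1.1 - a₂ i (σ i).2.1
  let F : σT → (Fin m → ℝ) → (Fin n → ℝ) := fun σ x i => (∑ j, (Mσ σ i j : ℝ) * x j) + cσ σ i
  -- R σ ⊆ P
  have hRP : ∀ σ : σT, R σ ⊆ {x | ∀ i, (∑ j, (aP i j : ℝ) * x j) + bP i ≤ 0} := by
    intro σ x hx i
    exact hx (Sum.inl i)
  -- θ = F σ on R σ
  have hθF : ∀ (σ : σT) (x : Fin m → ℝ), x ∈ R σ → θ x = F σ x := by
    intro σ x hx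
    funext i
    have hv1 : f₁ i x = a₁ i (σ i).1.1 + lin (σ i).1.1 x := by
      rw [ha₁ i x]
      apply le_antisymm
      · apply Finset.sup'_le
        intro v hv
        have h := hx (Sum.inr (Sum.inl ⟨i, ⟨v, hv⟩⟩))
        simp only [aR, bR] at h
        rw [hsub] at h
        change lin v x - lin (σ i).1.1 x + (a₁ i v - a₁ i (σ i).1.1) ≤ 0 at h
        change a₁ i v + lin v x ≤ _
        linarith
      · exact Finset.le_sup' (fun v => a₁ i v + ∑ j, (v j : ℝ) * x j) (σ i).1.2
    have hv2 : f₂ i x = a₂ i (σ i).2.1 + lin (σ i).2.1 x := by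
      rw [ha₂ i x]
      apply le_antisymm
      · apply Finset.sup'_le
        intro v hv
        have h := hx (Sum.inr (Sum.inr ⟨i, ⟨v, hv⟩⟩))
        simp only [aR, bR] at h
        rw [hsub] at h
        change lin v x - lin (σ i).2.1 x + (a₂ i v - a₂ i (σ i).2.1) ≤ 0 at h
        change a₂ i v + lin v x ≤ _
        linarith
      · exact Finset.le_sup' (fun v => a₂ i v + ∑ j, (v j : ℝ) * x j) (σ i).2.2
    rw [hf' i x, hv1, hv2]
    show _ = (∑ j, (Mσ σ i j : ℝ) * x j) + cσ σ i
    simp only [Mσ, cσ]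
    rw [hsub]
    ring
  -- covering
  have hcov : ∀ x ∈ {x | ∀ i, (∑ j, (aP i j : ℝ) * x j) + bP i ≤ 0}, ∃ σ : σT, x ∈ R σ := by
    intro x hx
    have hc1 : ∀ i : Fin n, ∃ γ : ↥(A₁ i), ∀ v ∈ A₁ i,
        a₁ i v + lin v x ≤ a₁ i γ.1 + lin γ.1 x := by
      intro i
      obtain ⟨g, hg, he⟩ := Finset.exists_mem_eq_sup' (hA₁ i)
        (fun v => a₁ i v + ∑ j, (v j : ℝ) * x j)
      exact ⟨⟨g, hg⟩, fun v hv => he ▸ Finset.le_sup' (fun v => a₁ i v + ∑ j, (v j : ℝ) * x j) hv⟩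
    have hc2 : ∀ i : Fin n, ∃ γ : ↥(A₂ i), ∀ v ∈ A₂ i,
        a₂ i v + lin v x ≤ a₂ i γ.1 + lin γ.1 x := by
      intro i
      obtain ⟨g, hg, he⟩ := Finset.exists_mem_eq_sup' (hA₂ i)
        (fun v => a₂ i v + ∑ j, (v j : ℝ) * x j)
      exact ⟨⟨g, hg⟩, fun v hv => he ▸ Finset.le_sup' (fun v => a₂ i v + ∑ j, (v j : ℝ) * x j) hv⟩
    choose g1 hg1 using hc1
    choose g2 hg2 using hc2
    refine ⟨fun i => (g1 i, g2 i), ?_⟩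
    intro i'
    match i' with
    | Sum.inl i => exact hx i
    | Sum.inr (Sum.inl ⟨i, γ⟩) =>
      simp only [aR, bR]
      rw [hsub]
      have := hg1 i γ.1 γ.2
      linarith
    | Sum.inr (Sum.inr ⟨i, γ⟩) =>
      simp only [aR, bR]
      rw [hsub]
      have := hg2 i γ.1 γ.2
      linarith
  -- main union
  have hunion : θ '' {x | ∀ i, (∑ j, (aP i j : ℝ) * x j) + bP i ≤ 0} = ⋃ σ : σT, F σ '' R σ := by
    ext y
    simp only [Set.mem_image, Set.mem_iUnion]
    constructor
    · rintro ⟨x, hx, rfl⟩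
      obtain ⟨σ, hσ⟩ := hcov x hx
      exact ⟨σ, x, hσ, (hθF σ x hσ).symm⟩
    · rintro ⟨σ, x, hσ, rfl⟩
      exact ⟨x, hRP σ hσ, hθF σ x hσ⟩
  -- each piece is rational polyhedral
  have hQ : ∀ σ : σT, IsRatPolyhedral n (F σ '' R σ) := by
    intro σ
    exact affine_image (Mσ σ) (cσ σ) (R σ) (ratPoly_fintype (aR σ) (bR σ))
  -- reindex
  let e := Fintype.equivFin σT
  refine ⟨Fintype.card σT, fun t => F (e.symm t) '' R (e.symm t), fun t => hQ _, ?_⟩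
  rw [hunion]
  ext y
  simp only [Set.mem_iUnion]
  constructor
  · rintro ⟨σ, h⟩; exact ⟨e σ, by simpa using h⟩
  · rintro ⟨t, h⟩; exact ⟨e.symm t, h⟩
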